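/- Let E = [0,1] with Borel σ-algebra, d = 1, each λ^i Lebesgue measure, and ρ_i(ω) = 2·1_{[0,1/2]}(ω_i) if |{j : ω_j > 1/2}| = ∞, ρ_i(ω) = 2·1_{(1/2,1]}(ω_i) otherwise. Then the construction ρ_{Θ∪Γ} = ρ_Θ/R_Θ^Γ applied to this family yields, for every finite Λ ⊆ ℤ, ρ_Λ(ω) = 2^{|Λ|}·1_{[0,1/2]^Λ}(ω_Λ) if |{j : ω_j > 1/2}| = ∞, and ρ_Λ(ω) = 2^{|Λ|}·1_{(1/2,1]^Λ}(ω_Λ) otherwise. -/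

import Mathlib

open MeasureTheory ProbabilityTheory
open scoped ENNReal NNReal

namespace GibbsSingleton

/-- Configuration space `E^ι`. -/
abbrev Config (ι E : Type*) := ι → E

variable {ι E : Type*}

/-- The configuration equal to `σ` on `Λ` and to `ω` off `Λ`. -/
def subst [DecidableEq ι] (Λ : Finset ι) (σ : {x // x ∈ Λ} → E) (ω : Config ι E) :
    Config ι E := fun i => if h : i ∈ Λ then σ ⟨i, h⟩ else ω i

variable [MeasurableSpace E]

/-- The free kernel `λ_Λ` applied to an `ℝ≥0∞`-valued function:
`λ_Λ(h ∣ ω) = ∫ h(σ_Λ ω) λ^Λ(dσ_Λ)`. -/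
noncomputable def freeF [DecidableEq ι] (lam : ι → Measure E) (Λ : Finset ι)
    (h : Config ι E → ℝ≥0∞) (ω : Config ι E) : ℝ≥0∞ :=
  ∫⁻ σ : {x // x ∈ Λ} → E, h (subst Λ σ ω) ∂(Measure.pi fun i : {x // x ∈ Λ} => lam i.1)

/-- The function `ρ_i ρ_j⁻¹`, `ℝ≥0∞`-valued. -/
noncomputable def rat (ρ : ι → Config ι E → ℝ≥0) (i j : ι) (η : Config ι E) : ℝ≥0∞ :=
  (ρ i η : ℝ≥0∞) / (ρ j η : ℝ≥0∞)

/-- The set `b(j,V,ω)` of good configurations at site `j` given `ω` outside `V ∪ {j}`. -/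
noncomputable def bSet [DecidableEq ι] (lam : ι → Measure E) (ρ : ι → Config ι E → ℝ≥0)
    (j : ι) (V : Finset ι) (ω : Config ι E) : Set E :=
  {x | (∀ σ : {y // y ∈ V} → E, 0 < ρ j (subst V σ (Function.update ω j x))) ∧
    ∀ i, i ≠ j →
      0 < (⨅ σ : {y // y ∈ V} → E,
          freeF lam {i} (rat ρ i j) (subst V σ (Function.update ω j x))) ∧
      (⨆ σ : {y // y ∈ V} → E,
          freeF lam {i} (rat ρ i j) (subst V σ (Function.update ω j x))) < ⊤}

/-- The multi-site good set `b(V,W,ω)`. -/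
noncomputable def bSetF [DecidableEq ι] (lam : ι → Measure E) (ρ : ι → Config ι E → ℝ≥0)
    (V W : Finset ι) (ω : Config ι E) : Set ({x // x ∈ V} → E) :=
  {xV | ∀ k : {x // x ∈ V}, xV k ∈ bSet lam ρ k.1 ((V.erase k.1) ∪ W) ω}

/-- The set `B(j,V) = {ω : ω_j ∈ b(j,V,ω)}`. -/
noncomputable def BSet [DecidableEq ι] (lam : ι → Measure E) (ρ : ι → Config ι E → ℝ≥0)
    (j : ι) (V : Finset ι) : Set (Config ι E) :=
  {ω | ω j ∈ bSet lam ρ j V ω}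

/-- Hypothesis (H1): every good set `b(j,V,ω)` is nonempty. -/
def H1 [DecidableEq ι] (lam : ι → Measure E) (ρ : ι → Config ι E → ℝ≥0) : Prop :=
  ∀ (ω : Config ι E) (j : ι) (V : Finset ι), j ∉ V → (bSet lam ρ j V ω).Nonempty

/-- The order-consistency identity appearing in hypothesis (H2), with the convention
`1/∞ = 0` built into `ℝ≥0∞` division. -/
def H2id [DecidableEq ι] (lam : ι → Measure E) (ρ : ι → Config ι E → ℝ≥0)
    (i j : ι) (ω : Config ι E) : Prop :=
  ∀ xi ∈ bSet lam ρ i {j} ω, ∀ xj ∈ bSet lam ρ j {i} ω,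
    ((ρ i ω : ℝ≥0∞) * (ρ j (Function.update ω i xi) : ℝ≥0∞)) /
      ((ρ i (Function.update ω i xi) : ℝ≥0∞) *
        freeF lam {j} (rat ρ j i) (Function.update ω i xi))
    = ((ρ j ω : ℝ≥0∞) * (ρ i (Function.update ω j xj) : ℝ≥0∞)) /
      ((ρ j (Function.update ω j xj) : ℝ≥0∞) *
        freeF lam {i} (rat ρ i j) (Function.update ω j xj))

/-- Hypothesis (H2). -/
def H2 [DecidableEq ι] (lam : ι → Measure E) (ρ : ι → Config ι E → ℝ≥0) : Prop :=
  ∀ i j, i ≠ j → ∀ ω : Config ι E, H2id lam ρ i j ω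

/-- `R_Θ^Γ` evaluated using the choice `x_Θ`:
`((ρ_Θ/ρ_Γ) ⬝ λ_Γ(ρ_Γ ρ_Θ⁻¹))(x_Θ ω)`. -/
noncomputable def Rexpr [DecidableEq ι] (lam : ι → Measure E)
    (ρF : Finset ι → Config ι E → ℝ≥0) (Θ Γ : Finset ι) (x : {y // y ∈ Θ} → E)
    (ω : Config ι E) : ℝ≥0∞ :=
  ((ρF Θ (subst Θ x ω) : ℝ≥0∞) / (ρF Γ (subst Θ x ω) : ℝ≥0∞)) *
    freeF lam Γ (fun η => (ρF Γ η : ℝ≥0∞) / (ρF Θ η : ℝ≥0∞)) (subst Θ x ω)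

/-- The family `ρ_Λ` is obtained from the singletons `ρ_i` by the recursive construction
`ρ_{Λ∪{i}} = ρ_Λ / R_Λ^i`, `R_Λ^i(ω) = ((ρ_Λ/ρ_i) ⬝ λ_i(ρ_i ρ_Λ⁻¹))(x_Λ ω)`,
`x_Λ ∈ b(Λ,{i},ω)` (the value being independent of this choice). -/
def IsRec [DecidableEq ι] (lam : ι → Measure E) (ρ : ι → Config ι E → ℝ≥0)
    (ρF : Finset ι → Config ι E → ℝ≥0) : Prop :=
  (∀ ω, ρF ∅ ω = 1) ∧ (∀ i, ρF {i} = ρ i) ∧ (∀ Λ, Measurable (ρF Λ)) ∧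
  ∀ (Λ : Finset ι) (i : ι), i ∉ Λ → ∀ ω : Config ι E,
    (∀ x ∈ bSetF lam ρ Λ {i} ω, ∀ x' ∈ bSetF lam ρ Λ {i} ω,
      Rexpr lam ρF Λ {i} x ω = Rexpr lam ρF Λ {i} x' ω) ∧
    ∀ x ∈ bSetF lam ρ Λ {i} ω,
      (ρF (insert i Λ) ω : ℝ≥0∞) = (ρF Λ ω : ℝ≥0∞) / Rexpr lam ρF Λ {i} x ω

/-- The sub-σ-algebra `𝓕_U` of events generated by the coordinates in `U`. -/
def cylSigma (E : Type*) [MeasurableSpace E] {ι : Type*} (U : Set ι) :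
    MeasurableSpace (Config ι E) :=
  MeasurableSpace.comap (fun ω (i : U) => ω i.1) MeasurableSpace.pi

/-- A specification: a family of probability kernels, measurable w.r.t. the outside
σ-algebra, proper, and consistent. -/
def IsSpecification (γ : Finset ι → Kernel (Config ι E) (Config ι E)) : Prop :=
  (∀ Λ, IsMarkovKernel (γ Λ)) ∧
  (∀ (Λ : Finset ι) (A : Set (Config ι E)), MeasurableSet A →
    Measurable[cylSigma E ((Λ : Set ι)ᶜ)] fun ω => γ Λ ω A) ∧
  (∀ (Λ : Finset ι) (B : Set (Config ι E)), MeasurableSet[cylSigma E ((Λ : Set ι)ᶜ)] B →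
    ∀ ω, γ Λ ω B = B.indicator (fun _ => (1 : ℝ≥0∞)) ω) ∧
  (∀ Λ Δ : Finset ι, Λ ⊆ Δ → (γ Λ).comp (γ Δ) = γ Δ)

/-- The kernel family `γ` is `{ρ_Λ λ_Λ}`. -/
def MatchesDensity [DecidableEq ι] (lam : ι → Measure E)
    (γ : Finset ι → Kernel (Config ι E) (Config ι E))
    (ρF : Finset ι → Config ι E → ℝ≥0) : Prop :=
  ∀ (Λ : Finset ι) (ω : Config ι E) (A : Set (Config ι E)), MeasurableSet A →
    γ Λ ω A = freeF lam Λ (fun η => (ρF Λ η : ℝ≥0∞) * A.indicator (fun _ => 1) η) ω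

end GibbsSingleton

open GibbsSingleton MeasureTheory ProbabilityTheory
open scoped Classical

namespace GibbsSingleton

/-- The a priori measures of the example: Lebesgue measure on `[0,1]` at every site. -/
noncomputable def exLam : ℤ → Measure (Set.Icc (0:ℝ) 1) := fun _ => volume

/-- The singleton densities of Example 1. -/
noncomputable def exRho (i : ℤ) (ω : Config ℤ (Set.Icc (0:ℝ) 1)) : ℝ≥0 :=
  if {j : ℤ | 1 / 2 < (ω j : ℝ)}.Infinite then
    (if (ω i : ℝ) ≤ 1 / 2 then 2 else 0)
  else
    (if 1 / 2 < (ω i : ℝ) then 2 else 0)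

end GibbsSingleton

/-!
Every `ρ_i(ω)` is `2` times the indicator, evaluated at `ω_i`, of a half `goodHalf ω` of `[0,1]`
that depends only on the tail of `ω`, so it is unchanged by the finite modifications made in the
recursion. Taking `x_Λ` with all coordinates in the good half makes `ρ_Λ = 2^{|Λ|}` constant on
the `i`-fibre through `x_Λ ω`; it cancels from `R_Λ^i`, leaving `ρ_i(ω)⁻¹ ⬝ λ_i(ρ_i) = ρ_i(ω)⁻¹`
since `ρ_i` is a probability density. Hence `ρ_{Λ∪{i}} = ρ_i ρ_Λ`, and `ρ_Λ = ∏_{i∈Λ} ρ_i`.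
-/

namespace GibbsSingleton

open Function

section FreeKernel

variable {ι E : Type*} [DecidableEq ι]

lemma subst_apply_of_mem {Λ : Finset ι} {σ : {x // x ∈ Λ} → E} {ω : Config ι E} {j : ι}
    (h : j ∈ Λ) : subst Λ σ ω j = σ ⟨j, h⟩ := dif_pos h

lemma subst_apply_of_notMem {Λ : Finset ι} {σ : {x // x ∈ Λ} → E} {ω : Config ι E} {j : ι}
    (h : j ∉ Λ) : subst Λ σ ω j = ω j := dif_neg h

lemma subst_singleton (i : ι) (σ : {x // x ∈ ({i} : Finset ι)} → E) (ω : Config ι E) :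
    subst {i} σ ω = update ω i (σ ⟨i, Finset.mem_singleton_self i⟩) := by
  funext j
  by_cases hj : j = i
  · subst hj
    rw [subst_apply_of_mem (Finset.mem_singleton_self j), update_self]
  · rw [subst_apply_of_notMem (by simpa using hj), update_of_ne hj]

variable [MeasurableSpace E]

lemma freeF_singleton (lam : ι → Measure E) (i : ι) (h : Config ι E → ℝ≥0∞)
    (ω : Config ι E) : freeF lam {i} h ω = ∫⁻ x, h (update ω i x) ∂lam i := by
  let e := MeasurableEquiv.funUnique {x // x ∈ ({i} : Finset ι)} E
  have hlam : (fun j : {x // x ∈ ({i} : Finset ι)} => lam j.1) = fun _ => lam i :=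
    funext fun j => by rw [Finset.mem_singleton.mp j.2]
  have hmap : (Measure.pi fun _ : {x // x ∈ ({i} : Finset ι)} => lam i).map e = lam i :=
    (measurePreserving_funUnique (lam i) _).map_eq
  rw [freeF, hlam]
  conv_rhs => rw [← hmap, lintegral_map_equiv]
  simp only [subst_singleton]
  rfl

lemma Rexpr_singleton_of_const (lam : ι → Measure E) (ρF : Finset ι → Config ι E → ℝ≥0)
    {Λ : Finset ι} {i : ι} {x : {y // y ∈ Λ} → E} {ω : Config ι E} {c : ℝ≥0} (hc : c ≠ 0)
    (hconst : ∀ z, ρF Λ (update (subst Λ x ω) i z) = c) :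
    Rexpr lam ρF Λ {i} x ω =
      (ρF {i} (subst Λ x ω) : ℝ≥0∞)⁻¹ * ∫⁻ z, ρF {i} (update (subst Λ x ω) i z) ∂lam i := by
  have hc' : (c : ℝ≥0∞) ≠ 0 := ENNReal.coe_ne_zero.mpr hc
  have hcenter : ρF Λ (subst Λ x ω) = c := by
    simpa only [update_eq_self] using hconst (subst Λ x ω i)
  simp only [Rexpr, freeF_singleton, hconst, hcenter, div_eq_mul_inv]
  rw [lintegral_mul_const' _ _ (ENNReal.inv_ne_top.mpr hc')]
  calc (c : ℝ≥0∞) * (ρF {i} (subst Λ x ω) : ℝ≥0∞)⁻¹ *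
        ((∫⁻ z, ρF {i} (update (subst Λ x ω) i z) ∂lam i) * (c : ℝ≥0∞)⁻¹)
      = (c * (c : ℝ≥0∞)⁻¹) * ((ρF {i} (subst Λ x ω) : ℝ≥0∞)⁻¹ *
          ∫⁻ z, ρF {i} (update (subst Λ x ω) i z) ∂lam i) := by ring
    _ = _ := by rw [ENNReal.mul_inv_cancel hc' ENNReal.coe_ne_top, one_mul]

end FreeKernel

local notation "I01" => Set.Icc (0:ℝ) 1

def goodHalf (ω : Config ℤ I01) : Set I01 :=
  if {j : ℤ | 1 / 2 < (ω j : ℝ)}.Infinite then {x | (x : ℝ) ≤ 1 / 2} else {x | 1 / 2 < (x : ℝ)}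

lemma goodHalf_congr {η ω : Config ℤ I01} {s : Set ℤ} (hs : s.Finite)
    (h : ∀ j ∉ s, η j = ω j) : goodHalf η = goodHalf ω := by
  have hdiff : {j : ℤ | 1 / 2 < (η j : ℝ)} \ s = {j : ℤ | 1 / 2 < (ω j : ℝ)} \ s := by
    ext j
    simp only [Set.mem_sdiff, Set.mem_ofPred_eq]
    exact and_congr_left fun hj => by rw [h j hj]
  have hinf : {j : ℤ | 1 / 2 < (η j : ℝ)}.Infinite ↔ {j : ℤ | 1 / 2 < (ω j : ℝ)}.Infinite :=
    ⟨fun hη => (hdiff ▸ hη.sdiff hs).mono Set.sdiff_subset,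
      fun hω => (hdiff.symm ▸ hω.sdiff hs).mono Set.sdiff_subset⟩
  simp only [goodHalf, hinf]

lemma goodHalf_update (ω : Config ℤ I01) (i : ℤ) (z : I01) :
    goodHalf (update ω i z) = goodHalf ω :=
  goodHalf_congr (Set.finite_singleton i) fun _ hj => update_of_ne hj _ _

lemma goodHalf_subst (Λ : Finset ℤ) (σ : {x // x ∈ Λ} → I01) (ω : Config ℤ I01) :
    goodHalf (subst Λ σ ω) = goodHalf ω :=
  goodHalf_congr Λ.finite_toSet fun _ hj => subst_apply_of_notMem hj

lemma goodHalf_nonempty (ω : Config ℤ I01) : (goodHalf ω).Nonempty := by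
  unfold goodHalf
  split_ifs
  · exact ⟨⟨0, by norm_num, by norm_num⟩, by norm_num⟩
  · exact ⟨⟨1, by norm_num, by norm_num⟩, by norm_num⟩

lemma measurableSet_goodHalf (ω : Config ℤ I01) : MeasurableSet (goodHalf ω) := by
  unfold goodHalf
  split_ifs
  · exact measurable_subtype_coe measurableSet_Iic
  · exact measurable_subtype_coe measurableSet_Ioi

lemma volume_goodHalf (ω : Config ℤ I01) : volume (goodHalf ω) = 2⁻¹ := by
  rw [← volume_image_subtype_coe measurableSet_Icc]
  unfold goodHalf
  split_ifs
  · have himage : ((↑) '' {x : I01 | (x : ℝ) ≤ 1 / 2} : Set ℝ) = Set.Icc 0 (1 / 2) := by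
      ext r
      simp only [Set.mem_image, Set.mem_ofPred_eq, Set.mem_Icc, Subtype.exists, exists_and_right,
        exists_eq_right]
      constructor
      · rintro ⟨⟨h0, -⟩, h⟩; exact ⟨h0, h⟩
      · rintro ⟨h0, h⟩; exact ⟨⟨h0, by linarith⟩, h⟩
    rw [himage, Real.volume_Icc, sub_zero, one_div, ENNReal.ofReal_inv_of_pos two_pos,
      ENNReal.ofReal_ofNat]
  · have himage : ((↑) '' {x : I01 | 1 / 2 < (x : ℝ)} : Set ℝ) = Set.Ioc (1 / 2) 1 := by
      ext r
      simp only [Set.mem_image, Set.mem_ofPred_eq, Set.mem_Icc, Set.mem_Ioc, Subtype.exists,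
        exists_and_right, exists_eq_right]
      constructor
      · rintro ⟨⟨-, h1⟩, h⟩; exact ⟨h, h1⟩
      · rintro ⟨h, h1⟩; exact ⟨⟨by linarith, h1⟩, h⟩
    rw [himage, Real.volume_Ioc, show (1 : ℝ) - 1 / 2 = 2⁻¹ by norm_num,
      ENNReal.ofReal_inv_of_pos two_pos, ENNReal.ofReal_ofNat]

lemma exRho_eq_indicator (i : ℤ) (ω : Config ℤ I01) :
    exRho i ω = (goodHalf ω).indicator (fun _ => 2) (ω i) := by
  unfold exRho goodHalf
  split_ifs <;> simp_all [Set.indicator]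

lemma exRho_update_self (i : ℤ) (ω : Config ℤ I01) (z : I01) :
    exRho i (update ω i z) = (goodHalf ω).indicator (fun _ => 2) z := by
  rw [exRho_eq_indicator, goodHalf_update, update_self]

lemma exRho_update_of_ne {i j : ℤ} (hij : j ≠ i) (ω : Config ℤ I01) (z : I01) :
    exRho j (update ω i z) = exRho j ω := by
  rw [exRho_eq_indicator, exRho_eq_indicator, goodHalf_update, update_of_ne hij]

lemma exRho_subst_of_notMem {Λ : Finset ℤ} {i : ℤ} (hi : i ∉ Λ) (σ : {x // x ∈ Λ} → I01)
    (ω : Config ℤ I01) : exRho i (subst Λ σ ω) = exRho i ω := by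
  rw [exRho_eq_indicator, exRho_eq_indicator, goodHalf_subst, subst_apply_of_notMem hi]

lemma exRho_subst_of_mem {Λ : Finset ℤ} {k : ℤ} (hk : k ∈ Λ) (σ : {x // x ∈ Λ} → I01)
    (ω : Config ℤ I01) :
    exRho k (subst Λ σ ω) = (goodHalf ω).indicator (fun _ => 2) (σ ⟨k, hk⟩) := by
  rw [exRho_eq_indicator, goodHalf_subst, subst_apply_of_mem hk]

lemma lintegral_exRho_update (i : ℤ) (ω : Config ℤ I01) :
    ∫⁻ z, exRho i (update ω i z) ∂exLam i = 1 := by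
  simp only [exRho_update_self, ENNReal.coe_indicator, ENNReal.coe_ofNat]
  rw [exLam, lintegral_indicator_const (measurableSet_goodHalf ω), volume_goodHalf]
  exact ENNReal.mul_inv_cancel two_ne_zero ENNReal.ofNat_ne_top

lemma freeF_rat_exRho {i k : ℤ} (hik : i ≠ k) {η : Config ℤ I01} (hk : η k ∈ goodHalf η) :
    freeF exLam {i} (rat exRho i k) η = 2⁻¹ := by
  have hden : ∀ z, exRho k (update η i z) = 2 := fun z => by
    rw [exRho_update_of_ne hik.symm, exRho_eq_indicator, Set.indicator_of_mem hk]
  simp only [freeF_singleton, rat, hden, div_eq_mul_inv]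
  rw [lintegral_mul_const' _ _ (by simp), lintegral_exRho_update, one_mul]
  rfl

lemma mem_bSet_of_mem_goodHalf {j : ℤ} {V : Finset ℤ} (hj : j ∉ V) {ω : Config ℤ I01}
    {g : I01} (hg : g ∈ goodHalf ω) : g ∈ bSet exLam exRho j V ω := by
  have hgood : ∀ σ : {y // y ∈ V} → I01,
      subst V σ (update ω j g) j ∈ goodHalf (subst V σ (update ω j g)) := fun σ => by
    rwa [subst_apply_of_notMem hj, update_self, goodHalf_subst, goodHalf_update]
  refine ⟨fun σ => ?_, fun i hij => ?_⟩
  · rw [exRho_eq_indicator, Set.indicator_of_mem (hgood σ)]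
    exact two_pos
  · simp only [freeF_rat_exRho hij (hgood _), iInf_const, iSup_const]
    exact ⟨ENNReal.inv_pos.mpr ENNReal.ofNat_ne_top, ENNReal.inv_lt_top.mpr two_pos⟩

lemma rhoF_insert {ρF : Finset ℤ → Config ℤ I01 → ℝ≥0} (hrec : IsRec exLam exRho ρF)
    {Λ : Finset ℤ} {i : ℤ} (hi : i ∉ Λ) (hΛ : ∀ ω, ρF Λ ω = ∏ k ∈ Λ, exRho k ω)
    (ω : Config ℤ I01) : ρF (insert i Λ) ω = exRho i ω * ρF Λ ω := by
  obtain ⟨-, hsingle, -, hstep⟩ := hrec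
  obtain ⟨g, hg⟩ := goodHalf_nonempty ω
  set x : {y // y ∈ Λ} → I01 := fun _ => g
  have hx : x ∈ bSetF exLam exRho Λ {i} ω := fun k =>
    mem_bSet_of_mem_goodHalf (by simp [k.2.ne_of_notMem hi]) hg
  have hconst : ∀ z, ρF Λ (update (subst Λ x ω) i z) = 2 ^ Λ.card := fun z => by
    rw [hΛ, ← Finset.prod_const]
    refine Finset.prod_congr rfl fun k hk => ?_
    rw [exRho_update_of_ne (ne_of_mem_of_not_mem hk hi), exRho_subst_of_mem hk,
      Set.indicator_of_mem hg]
  have hR : Rexpr exLam ρF Λ {i} x ω = (exRho i ω : ℝ≥0∞)⁻¹ := by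
    rw [Rexpr_singleton_of_const exLam ρF (pow_ne_zero _ two_ne_zero) hconst, hsingle,
      lintegral_exRho_update, exRho_subst_of_notMem hi, mul_one]
  -- when `ρ_i(ω) = 0`, `R_Λ^i = ⊤` and the convention `1/∞ = 0` gives `ρ_{Λ∪{i}}(ω) = 0`
  apply ENNReal.coe_injective
  rw [(hstep Λ i hi ω).2 x hx, hR, ENNReal.coe_mul, div_eq_mul_inv, inv_inv, mul_comm]

lemma rhoF_eq_prod {ρF : Finset ℤ → Config ℤ I01 → ℝ≥0} (hrec : IsRec exLam exRho ρF)
    (Λ : Finset ℤ) : ∀ ω, ρF Λ ω = ∏ k ∈ Λ, exRho k ω := by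
  induction Λ using Finset.induction_on with
  | empty => simpa using hrec.1
  | insert i Λ hi ih => exact fun ω => by rw [rhoF_insert hrec hi ih, Finset.prod_insert hi, ih]

end GibbsSingleton

/-- **Example 1, constructed family.**  The recursive construction applied to the
densities `exRho` yields `ρ_Λ(ω) = 2^{|Λ|} 1_{[0,1/2]^Λ}(ω_Λ)` when infinitely many
coordinates of `ω` exceed `1/2`, and `ρ_Λ(ω) = 2^{|Λ|} 1_{(1/2,1]^Λ}(ω_Λ)`
otherwise. -/
theorem example_constructed_family
    (ρF : Finset ℤ → Config ℤ (Set.Icc (0:ℝ) 1) → ℝ≥0)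
    (hrec : IsRec exLam exRho ρF) :
    ∀ (Λ : Finset ℤ) (ω : Config ℤ (Set.Icc (0:ℝ) 1)),
      ρF Λ ω =
        if {j : ℤ | 1 / 2 < (ω j : ℝ)}.Infinite then
          (if ∀ i ∈ Λ, (ω i : ℝ) ≤ 1 / 2 then (2 : ℝ≥0) ^ Λ.card else 0)
        else
          (if ∀ i ∈ Λ, 1 / 2 < (ω i : ℝ) then (2 : ℝ≥0) ^ Λ.card else 0) := by
  intro Λ ω
  rw [rhoF_eq_prod hrec]
  by_cases h : {j : ℤ | 1 / 2 < (ω j : ℝ)}.Infinite <;>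
    simp only [exRho, h, if_true, if_false, Finset.prod_ite_zero, Finset.prod_const]
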